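/- Let n ≥ 5 be odd with n ≡ 5 or 7 (mod 8) (equivalently n+1 ≡ 0 or 6 (mod 8)). Then the configuration consisting of the n vertices of a regular n-gon together with its barycenter is monochromatic under the Orchard relation. If instead n ≡ 1 or 3 (mod 8), the Orchard partition is (n,1): all vertices form one class and the barycenter forms the other. -/

import Mathlib

open scoped Classical

noncomputable section

/-- Orientation determinant of two vectors in the plane. -/
def det2 (u v : ℝ × ℝ) : ℝ := u.1 * v.2 - u.2 * v.1

/-- The line through `A` and `B` separates the points `P` and `Q`
(they lie in distinct open half-planes determined by the line). -/
def SepLine (A B P Q : ℝ × ℝ) : Prop :=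
  det2 (B - A) (P - A) * det2 (B - A) (Q - A) < 0

/-- A finite planar point set is a generic configuration if no three of its
points are collinear. -/
def Generic (C : Finset (ℝ × ℝ)) : Prop :=
  ∀ a ∈ C, ∀ b ∈ C, ∀ c ∈ C, a ≠ b → a ≠ c → b ≠ c →
    ¬ Collinear ℝ ({a, b, c} : Set (ℝ × ℝ))

/-- `nsep C P Q` is the number of lines spanned by (unordered) pairs of points of
`C \ {P,Q}` that separate `P` from `Q`. -/
def nsep (C : Finset (ℝ × ℝ)) (P Q : ℝ × ℝ) : ℕ :=
  (((C \ {P, Q}).powersetCard 2).filter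
    (fun s => ∃ A ∈ s, ∃ B ∈ s, A ≠ B ∧ SepLine A B P Q)).card

/-- The Orchard relation: `P ∼ Q` iff `n(P,Q) ≡ n - 3 (mod 2)` where `n = |C|`. -/
def Orchard (C : Finset (ℝ × ℝ)) (P Q : ℝ × ℝ) : Prop :=
  (nsep C P Q : ℤ) ≡ (C.card : ℤ) - 3 [ZMOD 2]

/-- A configuration is monochromatic if all its points are Orchard-equivalent. -/
def Mono (C : Finset (ℝ × ℝ)) : Prop :=
  ∀ P ∈ C, ∀ Q ∈ C, P ≠ Q → Orchard C P Q

/-- A configuration is in convex position if each of its points is a vertex of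
the convex hull. -/
def ConvexPos (C : Finset (ℝ × ℝ)) : Prop :=
  ∀ P ∈ C, P ∉ convexHull ℝ ((C : Set (ℝ × ℝ)) \ {P})

/-- The `k`-th vertex of the regular `n`-gon inscribed in the unit circle
centered at the origin. -/
def vtx (n : ℕ) (k : Fin n) : ℝ × ℝ :=
  (Real.cos (2 * Real.pi * k / n), Real.sin (2 * Real.pi * k / n))

/-- The configuration consisting of the vertices of the regular `n`-gon together
with its barycenter (the origin). -/
def ngonWithCenter (n : ℕ) : Finset (ℝ × ℝ) :=
  insert ((0, 0) : ℝ × ℝ) (Finset.image (vtx n) Finset.univ)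

/-!
A reflection `σ` of the configuration that preserves `{P, Q}` permutes the separating pairs
counted by `n(P, Q)` as an involution, so `n(P, Q)` has the parity of the number of
`σ`-invariant separating pairs. An invariant pair either lies on the axis of `σ` or is a chord
perpendicular to it, and such a chord never separates a point from its mirror image.

For two vertices `a ≠ b` the axis contains exactly the centre and the vertex `k` with
`2k ≡ a + b (mod n)` (unique as `n` is odd), and it separates `a` from `b`: `n(a, b)` is odd.
For a vertex `a` and the centre, the axis through `a` contains no other point, and the chord
through the vertices `a ± m` separates `a` from the centre iff `cos (2πm/n) > 0`, i.e. `4m < n`: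
`n(a, 0) ≡ ⌊n/4⌋`. Since the configuration has `n + 1` points, `P ∼ Q` iff `n(P, Q)` is odd.
-/

open Real Finset Function

theorem Function.Involutive.card_modEq_card_fixed {α : Type*} [DecidableEq α] {g : α → α}
    (hg : Involutive g) {F : Finset α} (hF : ∀ x ∈ F, g x ∈ F) :
    #F ≡ #{x ∈ F | g x = x} [MOD 2] := by
  have hfree : ∑ x ∈ F with ¬ g x = x, (1 : ZMod 2) = 0 :=
    sum_involution (fun x _ => g x) (fun _ _ => by decide) (fun _ hx _ => (mem_filter.1 hx).2)
      (fun x hx => by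
        obtain ⟨hxF, hgx⟩ := mem_filter.1 hx
        exact mem_filter.2 ⟨hF x hxF, by rwa [hg x, eq_comm]⟩)
      (fun x _ => hg x)
  rw [← ZMod.natCast_eq_natCast_iff, ← card_filter_add_card_filter_not (fun x => g x = x)]
  simpa using hfree

lemma image_pair_eq_self_iff {α : Type*} [DecidableEq α] {σ : α → α} (hσ : Involutive σ)
    (x y : α) : ({x, y} : Finset α).image σ = {x, y} ↔ (σ x = x ∧ σ y = y) ∨ σ x = y := by
  rw [image_insert, image_singleton, ← coe_inj, coe_pair, coe_pair, Set.pair_eq_pair_iff]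
  constructor
  · rintro (h | ⟨h, -⟩)
    exacts [Or.inl h, Or.inr h]
  · rintro (h | h)
    exacts [Or.inl h, Or.inr ⟨h, by rw [← h, hσ x]⟩]

lemma sepLine_comm {A B P Q : ℝ × ℝ} : SepLine A B P Q ↔ SepLine B A P Q := by
  have h (X : ℝ × ℝ) : det2 (A - B) (X - B) = -det2 (B - A) (X - A) := by
    simp only [det2, Prod.fst_sub, Prod.snd_sub]
    ring
  rw [SepLine, SepLine, h, h, neg_mul_neg]

lemma sepLine_symm {A B P Q : ℝ × ℝ} : SepLine A B P Q ↔ SepLine A B Q P := by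
  rw [SepLine, SepLine, mul_comm]

def sepPairs (C : Finset (ℝ × ℝ)) (P Q : ℝ × ℝ) : Finset (Finset (ℝ × ℝ)) :=
  ((C \ {P, Q}).powersetCard 2).filter (fun s => ∃ A ∈ s, ∃ B ∈ s, A ≠ B ∧ SepLine A B P Q)

lemma nsep_eq_card_sepPairs (C : Finset (ℝ × ℝ)) (P Q : ℝ × ℝ) :
    nsep C P Q = #(sepPairs C P Q) := rfl

lemma mem_sepPairs {C : Finset (ℝ × ℝ)} {P Q : ℝ × ℝ} {s : Finset (ℝ × ℝ)} :
    s ∈ sepPairs C P Q ↔ ∃ x ∈ C \ {P, Q}, ∃ y ∈ C \ {P, Q}, x ≠ y ∧ SepLine x y P Q ∧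
      s = {x, y} := by
  simp only [sepPairs, mem_filter, mem_powersetCard, card_eq_two]
  constructor
  · rintro ⟨⟨hsub, x, y, hxy, rfl⟩, A, hA, B, hB, hAB, hsep⟩
    refine ⟨x, hsub (by simp), y, hsub (by simp), hxy, ?_, rfl⟩
    simp only [mem_insert, mem_singleton] at hA hB
    rcases hA with rfl | rfl <;> rcases hB with rfl | rfl <;>
      first | exact absurd rfl hAB | exact hsep | exact sepLine_comm.1 hsep
  · rintro ⟨x, hx, y, hy, hxy, hsep, rfl⟩
    exact ⟨⟨by simp [insert_subset_iff, hx, hy], x, y, hxy, rfl⟩, x, by simp, y, by simp, hxy, hsep⟩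

lemma nsep_comm (C : Finset (ℝ × ℝ)) (P Q : ℝ × ℝ) : nsep C P Q = nsep C Q P := by
  simp only [nsep, pair_comm P Q, sepLine_symm]

lemma nsep_modEq_card_invariant_sepPairs {C : Finset (ℝ × ℝ)} {P Q : ℝ × ℝ}
    {σ : ℝ × ℝ → ℝ × ℝ} (hσ : Involutive σ) (hC : ∀ x ∈ C, σ x ∈ C)
    (hPQ : (σ P = P ∧ σ Q = Q) ∨ (σ P = Q ∧ σ Q = P))
    (hsep : ∀ A B P Q, SepLine (σ A) (σ B) (σ P) (σ Q) ↔ SepLine A B P Q) :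
    nsep C P Q ≡ #{s ∈ sepPairs C P Q | s.image σ = s} [MOD 2] := by
  have hD : ∀ x ∈ C \ {P, Q}, σ x ∈ C \ {P, Q} := by
    intro x hx
    simp only [mem_sdiff, mem_insert, mem_singleton, not_or] at hx ⊢
    refine ⟨hC x hx.1, fun h => ?_, fun h => ?_⟩ <;>
    · have := congrArg σ h
      rw [hσ x] at this
      rcases hPQ with ⟨hP, hQ⟩ | ⟨hP, hQ⟩ <;> simp_all
  have hsepPQ (A B : ℝ × ℝ) : SepLine (σ A) (σ B) P Q ↔ SepLine A B P Q := by
    have := hsep A B P Q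
    rcases hPQ with ⟨hP, hQ⟩ | ⟨hP, hQ⟩ <;> rw [hP, hQ] at this
    exacts [this, sepLine_symm.trans this]
  have himage : Involutive (image σ) := fun s => by
    rw [image_image, hσ.comp_self, image_id]
  rw [nsep_eq_card_sepPairs]
  refine himage.card_modEq_card_fixed fun s hs => ?_
  obtain ⟨x, hx, y, hy, hxy, hxyP, rfl⟩ := mem_sepPairs.1 hs
  rw [image_insert, image_singleton]
  exact mem_sepPairs.2 ⟨σ x, hD x hx, σ y, hD y hy, hσ.injective.ne hxy, (hsepPQ x y).2 hxyP, rfl⟩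

def pt (θ : ℝ) : ℝ × ℝ := (cos θ, sin θ)

lemma pt_eq_pt_iff {θ ψ : ℝ} : pt θ = pt ψ ↔ (θ : Real.Angle) = ψ := by
  refine ⟨fun h => Real.Angle.cos_sin_inj (congrArg Prod.fst h) (congrArg Prod.snd h),
    fun h => ?_⟩
  simp only [pt, ← Real.Angle.cos_coe, ← Real.Angle.sin_coe, h]

lemma pt_ne_zero (θ : ℝ) : pt θ ≠ 0 := fun h => by
  have h1 := sin_sq_add_cos_sq θ
  simp only [pt, Prod.ext_iff, Prod.fst_zero, Prod.snd_zero] at h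
  rw [h.1, h.2] at h1
  norm_num at h1

lemma det2_pt_pt (β γ : ℝ) : det2 (pt β) (pt γ) = sin (γ - β) := by
  simp only [det2, pt, sin_sub]
  ring

lemma det2_sub_pt_sub_pt (α β γ : ℝ) :
    det2 (pt β - pt α) (pt γ - pt α) = sin (γ - β) + sin (β - α) + sin (α - γ) := by
  simp only [det2, pt, Prod.fst_sub, Prod.snd_sub, sin_sub]
  ring

lemma det2_sub_pt_zero_sub_pt (α β : ℝ) : det2 (pt β - pt α) (0 - pt α) = sin (β - α) := by
  simp only [det2, pt, Prod.fst_sub, Prod.snd_sub, Prod.fst_zero, Prod.snd_zero, sin_sub]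
  ring

/-- The reflection in the line through the origin at angle `c / 2`. -/
def mirror (c : ℝ) (p : ℝ × ℝ) : ℝ × ℝ :=
  (cos c * p.1 + sin c * p.2, sin c * p.1 - cos c * p.2)

section Mirror

variable (c : ℝ)

lemma mirror_pt (θ : ℝ) : mirror c (pt θ) = pt (c - θ) := by
  simp [mirror, pt, cos_sub, sin_sub, mul_comm]

lemma mirror_zero : mirror c 0 = 0 := by simp [mirror]

lemma mirror_sub (p q : ℝ × ℝ) : mirror c (p - q) = mirror c p - mirror c q := by
  ext <;> simp only [mirror, Prod.fst_sub, Prod.snd_sub] <;> ring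

lemma mirror_involutive : Involutive (mirror c) := by
  intro p
  ext <;> simp only [mirror]
  · linear_combination p.1 * sin_sq_add_cos_sq c
  · linear_combination p.2 * sin_sq_add_cos_sq c

lemma det2_mirror (u v : ℝ × ℝ) : det2 (mirror c u) (mirror c v) = -det2 u v := by
  simp only [det2, mirror]
  linear_combination (u.2 * v.1 - u.1 * v.2) * sin_sq_add_cos_sq c

lemma sepLine_mirror {A B P Q : ℝ × ℝ} :
    SepLine (mirror c A) (mirror c B) (mirror c P) (mirror c Q) ↔ SepLine A B P Q := by
  simp only [SepLine, ← mirror_sub, det2_mirror, neg_mul_neg]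

lemma not_sepLine_mirror (A P : ℝ × ℝ) : ¬ SepLine A (mirror c A) P (mirror c P) := by
  -- reflecting swaps the ends of the chord and reverses orientation: the two signs agree
  have key : det2 (mirror c A - A) (mirror c P - A) = det2 (mirror c A - A) (P - A) := by
    have h := det2_mirror c (mirror c A - A) (P - mirror c A)
    rw [mirror_sub, mirror_sub, mirror_involutive] at h
    simp only [det2, Prod.fst_sub, Prod.snd_sub] at h ⊢
    linear_combination -h
  rw [SepLine, key, not_lt]
  exact mul_self_nonneg _

lemma sepLine_zero_mirror_iff {K : ℝ × ℝ} (hK : mirror c K = K) (P : ℝ × ℝ) :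
    SepLine 0 K P (mirror c P) ↔ det2 K P ≠ 0 := by
  rw [SepLine, sub_zero, sub_zero, sub_zero, ← hK, det2_mirror, hK, mul_neg, neg_lt_zero,
    ← pow_two, sq_pos_iff]

end Mirror

lemma sepLine_pt_mirror_zero_iff {α x : ℝ} (h : sin (α - x) ≠ 0) :
    SepLine (pt x) (mirror (2 * α) (pt x)) (pt α) 0 ↔ 0 < cos (α - x) := by
  set u := α - x
  have hα : α = x + u := by ring
  have h2 : 2 * α - x = x + 2 * u := by ring
  have hprod : det2 (pt (x + 2 * u) - pt x) (pt (x + u) - pt x) *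
      det2 (pt (x + 2 * u) - pt x) (0 - pt x) = 4 * sin u ^ 2 * cos u * (cos u - 1) := by
    rw [det2_sub_pt_sub_pt, det2_sub_pt_zero_sub_pt]
    simp only [add_sub_cancel_left, show x + u - (x + 2 * u) = -u by ring,
      show x - (x + u) = -u by ring, sin_neg, sin_two_mul]
    ring
  have hsin : 0 < sin u ^ 2 := by positivity
  have hcos : cos u < 1 := (cos_le_one u).lt_of_ne fun h1 => by
    nlinarith [sin_sq_add_cos_sq u]
  rw [SepLine, mirror_pt, h2, hα, hprod]
  constructor
  · intro hneg
    by_contra! hle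
    nlinarith [mul_nonneg (mul_nonneg hsin.le (neg_nonneg.2 hle)) (sub_nonneg.2 hcos.le)]
  · intro hpos
    nlinarith [mul_pos (mul_pos hsin hpos) (sub_pos.2 hcos)]

section Arithmetic

variable {n : ℕ}

lemma ZMod.natCast_ne_zero_of_pos_of_lt {m : ℕ} (hm0 : 0 < m) (hmn : m < n) :
    (m : ZMod n) ≠ 0 :=
  fun h => (Nat.le_of_dvd hm0 ((ZMod.natCast_eq_zero_iff m n).1 h)).not_gt hmn

lemma ZMod.isUnit_two_of_odd (hodd : Odd n) : IsUnit (2 : ZMod n) := by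
  simpa using (ZMod.isUnit_iff_coprime 2 n).2 (Nat.coprime_two_left.2 hodd)

lemma ZMod.exists_intCast_eq_two_mul (hodd : Odd n) (x : ℤ) : ∃ k : ℤ, (x : ZMod n) = 2 * k := by
  obtain ⟨u, hu⟩ := (ZMod.isUnit_two_of_odd hodd).exists_left_inv
  obtain ⟨k, hk⟩ := ZMod.intCast_surjective (u * (x : ZMod n))
  exact ⟨k, by rw [hk]; linear_combination (-(x : ZMod n)) * hu⟩

lemma sin_two_pi_mul_div_ne_zero (hodd : Odd n) {z : ℤ} (hz : (z : ZMod n) ≠ 0) :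
    sin (2 * π * z / n) ≠ 0 := by
  have hn : (n : ℝ) ≠ 0 := Nat.cast_ne_zero.2 hodd.pos.ne'
  rw [Ne, sin_eq_zero_iff]
  rintro ⟨m, hm⟩
  have hmz : ((m * n : ℤ) : ℝ) = (2 * z : ℤ) := by
    push_cast
    field_simp at hm
    linear_combination hm
  have h2z : ((2 * z : ℤ) : ZMod n) = 0 := by
    rw [← Int.cast_inj.1 hmz]
    simp
  push_cast at h2z
  exact hz ((ZMod.isUnit_two_of_odd hodd).mul_left_cancel (by rw [h2z, mul_zero]))

lemma cos_two_pi_mul_div_pos_iff [NeZero n] {m : ℕ} (hm : 2 * m ≤ n) :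
    0 < cos (2 * π * m / n) ↔ 4 * m < n := by
  have hn : (0 : ℝ) < n := Nat.cast_pos.2 (Nat.pos_of_ne_zero (NeZero.ne n))
  have hm' : (2 * m : ℝ) ≤ n := by exact_mod_cast hm
  constructor
  · intro hcos
    by_contra! h4
    have h4' : (n : ℝ) ≤ 4 * m := by exact_mod_cast h4
    refine hcos.not_ge (cos_nonpos_of_pi_div_two_le_of_le ?_ ?_)
    · rw [le_div_iff₀ hn]
      nlinarith [pi_pos]
    · rw [div_le_iff₀ hn]
      nlinarith [pi_pos]
  · intro h4
    have h4' : (4 * m : ℝ) < n := by exact_mod_cast h4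
    apply cos_pos_of_mem_Ioo
    constructor
    · have : 0 ≤ 2 * π * m / n := by positivity
      linarith [pi_pos]
    · rw [div_lt_iff₀ hn]
      nlinarith [pi_pos]

end Arithmetic

section Polygon

variable {n : ℕ}

def vertex (n : ℕ) (z : ℤ) : ℝ × ℝ := pt (2 * π * z / n)

lemma vtx_eq_vertex (k : Fin n) : vtx n k = vertex n k := by
  simp [vtx, vertex, pt]

lemma vertex_ne_zero (z : ℤ) : vertex n z ≠ 0 := pt_ne_zero _

lemma mirror_vertex (w z : ℤ) : mirror (2 * π * w / n) (vertex n z) = vertex n (w - z) := by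
  rw [vertex, mirror_pt, vertex]
  push_cast
  congr 1
  ring

lemma det2_vertex_vertex (z w : ℤ) :
    det2 (vertex n z) (vertex n w) = sin (2 * π * (w - z : ℤ) / n) := by
  rw [vertex, vertex, det2_pt_pt]
  push_cast
  ring_nf

variable [NeZero n]

lemma vertex_eq_vertex_iff {z w : ℤ} : vertex n z = vertex n w ↔ (z : ZMod n) = w := by
  have hn : (n : ℝ) ≠ 0 := Nat.cast_ne_zero.2 (NeZero.ne n)
  rw [vertex, vertex, pt_eq_pt_iff, Real.Angle.angle_eq_iff_two_pi_dvd_sub,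
    ZMod.intCast_eq_intCast_iff_dvd_sub]
  constructor
  · rintro ⟨k, hk⟩
    refine ⟨-k, ?_⟩
    have : (z : ℝ) - w = n * k := by field_simp at hk; exact hk
    exact_mod_cast (show (w : ℝ) - z = n * -(k : ℝ) by linear_combination -this)
  · rintro ⟨k, hk⟩
    refine ⟨-k, ?_⟩
    have : (w : ℝ) - z = n * k := by exact_mod_cast hk
    push_cast
    field_simp
    linear_combination -this

lemma mem_ngonWithCenter {p : ℝ × ℝ} :
    p ∈ ngonWithCenter n ↔ p = 0 ∨ ∃ z : ℤ, p = vertex n z := by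
  simp only [ngonWithCenter, mem_insert, mem_image, mem_univ, true_and, Prod.mk_zero_zero]
  refine or_congr Iff.rfl ⟨fun ⟨k, hk⟩ => ⟨k, by rw [← hk, vtx_eq_vertex]⟩, fun ⟨z, hz⟩ => ?_⟩
  refine ⟨⟨(z : ZMod n).val, ZMod.val_lt _⟩, ?_⟩
  rw [hz, vtx_eq_vertex, vertex_eq_vertex_iff]
  simp

lemma card_ngonWithCenter : #(ngonWithCenter n) = n + 1 := by
  have hinj : Injective (vtx n) := fun j k h => by
    rw [vtx_eq_vertex, vtx_eq_vertex, vertex_eq_vertex_iff] at h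
    simp only [Int.cast_natCast, ZMod.natCast_eq_natCast_iff', Nat.mod_eq_of_lt j.isLt,
      Nat.mod_eq_of_lt k.isLt] at h
    exact Fin.ext h
  rw [ngonWithCenter, card_insert_of_notMem, card_image_of_injective _ hinj, card_univ,
    Fintype.card_fin]
  simp only [mem_image, mem_univ, true_and, not_exists, Prod.mk_zero_zero, vtx_eq_vertex]
  exact fun k => vertex_ne_zero k

lemma orchard_ngonWithCenter_iff (hodd : Odd n) {P Q : ℝ × ℝ} :
    Orchard (ngonWithCenter n) P Q ↔ Odd (nsep (ngonWithCenter n) P Q) := by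
  obtain ⟨j, rfl⟩ := hodd
  rw [Orchard, card_ngonWithCenter, Int.ModEq, Nat.odd_iff]
  push_cast
  omega

lemma mirror_mem_ngonWithCenter (w : ℤ) {p : ℝ × ℝ} (hp : p ∈ ngonWithCenter n) :
    mirror (2 * π * w / n) p ∈ ngonWithCenter n := by
  rcases mem_ngonWithCenter.1 hp with rfl | ⟨z, rfl⟩
  · rwa [mirror_zero]
  · exact mem_ngonWithCenter.2 (Or.inr ⟨w - z, mirror_vertex w z⟩)

lemma mirror_vertex_eq_self_iff {w z : ℤ} :
    mirror (2 * π * w / n) (vertex n z) = vertex n z ↔ (w : ZMod n) = 2 * z := by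
  rw [mirror_vertex, vertex_eq_vertex_iff]
  push_cast
  constructor <;> intro h <;> linear_combination h

lemma eq_zero_or_vertex_of_mirror_eq_self {w : ℤ} {p : ℝ × ℝ} (hp : p ∈ ngonWithCenter n)
    (hfix : mirror (2 * π * w / n) p = p) :
    p = 0 ∨ ∃ z : ℤ, p = vertex n z ∧ (w : ZMod n) = 2 * z := by
  rcases mem_ngonWithCenter.1 hp with rfl | ⟨z, rfl⟩
  · exact Or.inl rfl
  · exact Or.inr ⟨z, rfl, mirror_vertex_eq_self_iff.1 hfix⟩

lemma sepLine_vertex_add_vertex_sub_iff (hodd : Odd n) (a : ℤ) {m : ℕ} (hm0 : 0 < m)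
    (hm2 : 2 * m ≤ n) :
    SepLine (vertex n (a + m)) (vertex n (a - m)) (vertex n a) 0 ↔ 4 * m < n := by
  have hmirror : vertex n (a - m) =
      mirror (2 * (2 * π * a / n)) (pt (2 * π * (a + m : ℤ) / n)) := by
    rw [mirror_pt, vertex]
    push_cast
    ring_nf
  have harg : 2 * π * a / n - 2 * π * (a + m : ℤ) / n = 2 * π * (-m : ℤ) / n := by
    push_cast
    ring
  have hsin : sin (2 * π * (-m : ℤ) / n) ≠ 0 := sin_two_pi_mul_div_ne_zero hodd (by
    rw [Int.cast_neg, neg_ne_zero, Int.cast_natCast]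
    exact ZMod.natCast_ne_zero_of_pos_of_lt hm0 (by omega))
  rw [hmirror, vertex, vertex, sepLine_pt_mirror_zero_iff (harg ▸ hsin), harg, ←
    cos_two_pi_mul_div_pos_iff hm2]
  push_cast
  rw [mul_neg, neg_div, cos_neg]

lemma exists_vertex_eq_add_or_sub {a z : ℤ} (hz : (z : ZMod n) ≠ a) :
    ∃ m : ℕ, 0 < m ∧ 2 * m ≤ n ∧
      (vertex n z = vertex n (a + m) ∨ vertex n z = vertex n (a - m)) := by
  set t := ((z - a : ℤ) : ZMod n).valMinAbs
  have ht : ((a + t : ℤ) : ZMod n) = z := by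
    rw [Int.cast_add, ZMod.coe_valMinAbs]
    push_cast
    ring
  have ht0 : t ≠ 0 := fun h => hz (by rw [← ht, h, add_zero])
  refine ⟨t.natAbs, Int.natAbs_pos.2 ht0, ?_, ?_⟩
  · have := ZMod.natAbs_valMinAbs_le ((z - a : ℤ) : ZMod n)
    omega
  rw [vertex_eq_vertex_iff, vertex_eq_vertex_iff, ← ht]
  rcases Int.natAbs_eq t with h | h
  · left
    rw [← h]
  · right
    rw [sub_eq_add_neg, ← h]

lemma injOn_vertex_add_sub_pair (a : ℤ) :
    Set.InjOn (fun m : ℕ => ({vertex n (a + m), vertex n (a - m)} : Finset (ℝ × ℝ)))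
      (Icc 1 (n / 4) : Finset ℕ) := by
  intro m₁ hm₁ m₂ hm₂ h
  simp only [coe_Icc, Set.mem_Icc] at hm₁ hm₂ h
  have hmem : vertex n (a + m₁) ∈ ({vertex n (a + m₂), vertex n (a - m₂)} : Finset (ℝ × ℝ)) := by
    rw [← h]
    exact mem_insert_self _ _
  rw [mem_insert, mem_singleton, vertex_eq_vertex_iff, vertex_eq_vertex_iff] at hmem
  push_cast at hmem
  rcases hmem with h | h
  · have : ((m₁ : ℕ) : ZMod n) = m₂ := by linear_combination h
    rwa [ZMod.natCast_eq_natCast_iff', Nat.mod_eq_of_lt (by omega),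
      Nat.mod_eq_of_lt (by omega)] at this
  · refine absurd ?_ (ZMod.natCast_ne_zero_of_pos_of_lt (n := n) (m := m₁ + m₂) (by omega)
      (by omega))
    push_cast
    linear_combination h

end Polygon

section Parity

variable {n : ℕ} [NeZero n]

lemma invariant_sepPairs_vertex_vertex (hodd : Odd n) {a b k : ℤ} (hab : (a : ZMod n) ≠ b)
    (hk : ((a + b : ℤ) : ZMod n) = 2 * k) :
    {s ∈ sepPairs (ngonWithCenter n) (vertex n a) (vertex n b) |
      s.image (mirror (2 * π * (a + b : ℤ) / n)) = s} = {{0, vertex n k}} := by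
  set σ := mirror (2 * π * (a + b : ℤ) / n)
  have hσa : σ (vertex n a) = vertex n b := (mirror_vertex _ a).trans (by ring_nf)
  have hσk : σ (vertex n k) = vertex n k := mirror_vertex_eq_self_iff.2 hk
  push_cast at hk
  have hka : vertex n k ≠ vertex n a := fun h => hab (by
    rw [vertex_eq_vertex_iff] at h
    linear_combination -hk - 2 * h)
  have hkb : vertex n k ≠ vertex n b := fun h => hab (by
    rw [vertex_eq_vertex_iff] at h
    linear_combination hk + 2 * h)
  have hfix : ∀ p ∈ ngonWithCenter n, σ p = p → p = 0 ∨ p = vertex n k := by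
    intro p hp hσp
    rcases eq_zero_or_vertex_of_mirror_eq_self hp hσp with h | ⟨z, rfl, hz⟩
    · exact Or.inl h
    · push_cast at hz
      exact Or.inr (vertex_eq_vertex_iff.2
        ((ZMod.isUnit_two_of_odd hodd).mul_left_cancel (hz.symm.trans hk)))
  ext s
  rw [mem_filter, mem_singleton]
  constructor
  · rintro ⟨hs, hσs⟩
    obtain ⟨x, hx, y, hy, hxy, hsep, rfl⟩ := mem_sepPairs.1 hs
    rcases (image_pair_eq_self_iff (mirror_involutive _) x y).1 hσs with ⟨hσx, hσy⟩ | rfl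
    · rcases hfix x (mem_sdiff.1 hx).1 hσx with rfl | rfl <;>
        rcases hfix y (mem_sdiff.1 hy).1 hσy with rfl | rfl
      all_goals first | exact absurd rfl hxy | rfl | exact pair_comm _ _
    · rw [← hσa] at hsep
      exact absurd hsep (not_sepLine_mirror _ _ _)
  · rintro rfl
    have hdet : det2 (vertex n k) (vertex n a) ≠ 0 := by
      rw [det2_vertex_vertex]
      refine sin_two_pi_mul_div_ne_zero hodd fun h => hka (vertex_eq_vertex_iff.2 ?_)
      push_cast at h
      linear_combination -h
    refine ⟨mem_sepPairs.2 ⟨0, ?_, vertex n k, ?_, (vertex_ne_zero k).symm, ?_, rfl⟩, ?_⟩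
    · simp [mem_ngonWithCenter, eq_comm, vertex_ne_zero]
    · simp [mem_ngonWithCenter, hka, hkb]
    · rw [← hσa]
      exact (sepLine_zero_mirror_iff _ hσk _).2 hdet
    · exact (image_pair_eq_self_iff (mirror_involutive _) _ _).2 (Or.inl ⟨mirror_zero _, hσk⟩)

lemma odd_nsep_vertex_vertex (hodd : Odd n) {a b : ℤ} (hab : (a : ZMod n) ≠ b) :
    Odd (nsep (ngonWithCenter n) (vertex n a) (vertex n b)) := by
  obtain ⟨k, hk⟩ := ZMod.exists_intCast_eq_two_mul hodd (a + b)
  have hσa : mirror (2 * π * (a + b : ℤ) / n) (vertex n a) = vertex n b := by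
    rw [mirror_vertex]; ring_nf
  have hσb : mirror (2 * π * (a + b : ℤ) / n) (vertex n b) = vertex n a := by
    rw [mirror_vertex]; ring_nf
  have hpar := nsep_modEq_card_invariant_sepPairs (mirror_involutive _)
    (fun _ => mirror_mem_ngonWithCenter _) (Or.inr ⟨hσa, hσb⟩) (fun _ _ _ _ => sepLine_mirror _)
  rw [invariant_sepPairs_vertex_vertex hodd hab hk, card_singleton] at hpar
  exact Nat.odd_iff.2 hpar

lemma vertex_mem_sdiff_vertex_zero {a z : ℤ} (hz : (z : ZMod n) ≠ a) :
    vertex n z ∈ ngonWithCenter n \ {vertex n a, 0} := by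
  simp only [mem_sdiff, mem_insert, mem_singleton, not_or, vertex_eq_vertex_iff, vertex_ne_zero,
    not_false_eq_true, and_true]
  exact ⟨mem_ngonWithCenter.2 (Or.inr ⟨z, rfl⟩), hz⟩

lemma pair_vertex_add_sub_mem_sepPairs (hodd : Odd n) (a : ℤ) {m : ℕ} (hm0 : 0 < m)
    (hm4 : 4 * m < n) :
    {vertex n (a + m), vertex n (a - m)} ∈ sepPairs (ngonWithCenter n) (vertex n a) 0 := by
  have hm : (m : ZMod n) ≠ 0 := ZMod.natCast_ne_zero_of_pos_of_lt hm0 (by omega)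
  have h2m : ((2 * m : ℕ) : ZMod n) ≠ 0 := ZMod.natCast_ne_zero_of_pos_of_lt (by omega) (by omega)
  refine mem_sepPairs.2 ⟨_, vertex_mem_sdiff_vertex_zero ?_, _, vertex_mem_sdiff_vertex_zero ?_,
    ?_, (sepLine_vertex_add_vertex_sub_iff hodd a hm0 (by omega)).2 hm4, rfl⟩
  · push_cast
    exact fun h => hm (by linear_combination h)
  · push_cast
    exact fun h => hm (by linear_combination -h)
  · rw [Ne, vertex_eq_vertex_iff]
    push_cast at h2m ⊢
    exact fun h => h2m (by linear_combination h)

lemma invariant_sepPairs_vertex_zero (hodd : Odd n) (a : ℤ) :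
    {s ∈ sepPairs (ngonWithCenter n) (vertex n a) 0 |
      s.image (mirror (2 * π * (2 * a : ℤ) / n)) = s} =
      (Icc 1 (n / 4)).image fun m : ℕ => {vertex n (a + m), vertex n (a - m)} := by
  have hσ_add (m : ℤ) :
      mirror (2 * π * (2 * a : ℤ) / n) (vertex n (a + m)) = vertex n (a - m) := by
    rw [mirror_vertex]; ring_nf
  have hσ_sub (m : ℤ) :
      mirror (2 * π * (2 * a : ℤ) / n) (vertex n (a - m)) = vertex n (a + m) := by
    rw [mirror_vertex]; ring_nf
  have hn := Nat.odd_iff.1 hodd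
  ext s
  simp only [mem_filter, mem_image]
  constructor
  · rintro ⟨hs, hσs⟩
    obtain ⟨x, hx, y, -, -, hsep, rfl⟩ := mem_sepPairs.1 hs
    simp only [mem_sdiff, mem_insert, mem_singleton, not_or] at hx
    rcases (image_pair_eq_self_iff (mirror_involutive _) x y).1 hσs with ⟨hσx, -⟩ | rfl
    · rcases eq_zero_or_vertex_of_mirror_eq_self hx.1 hσx with h | ⟨z, rfl, hz⟩
      · exact absurd h hx.2.2
      · push_cast at hz
        exact absurd (vertex_eq_vertex_iff.2
          ((ZMod.isUnit_two_of_odd hodd).mul_left_cancel hz.symm)) hx.2.1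
    · obtain ⟨z, rfl⟩ := (mem_ngonWithCenter.1 hx.1).resolve_left hx.2.2
      obtain ⟨m, hm0, hm2, hzm | hzm⟩ :=
        exists_vertex_eq_add_or_sub fun h => hx.2.1 (vertex_eq_vertex_iff.2 h)
      · rw [hzm, hσ_add] at hsep ⊢
        have := (sepLine_vertex_add_vertex_sub_iff hodd a hm0 hm2).1 hsep
        exact ⟨m, mem_Icc.2 ⟨hm0, by omega⟩, rfl⟩
      · rw [hzm, hσ_sub] at hsep ⊢
        have := (sepLine_vertex_add_vertex_sub_iff hodd a hm0 hm2).1 (sepLine_comm.1 hsep)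
        exact ⟨m, mem_Icc.2 ⟨hm0, by omega⟩, pair_comm _ _⟩
  · rintro ⟨m, hm, rfl⟩
    rw [mem_Icc] at hm
    exact ⟨pair_vertex_add_sub_mem_sepPairs hodd a hm.1 (by omega),
      (image_pair_eq_self_iff (mirror_involutive _) _ _).2 (Or.inr (hσ_add m))⟩

lemma nsep_vertex_zero_modEq (hodd : Odd n) (a : ℤ) :
    nsep (ngonWithCenter n) (vertex n a) 0 ≡ n / 4 [MOD 2] := by
  have hσa : mirror (2 * π * (2 * a : ℤ) / n) (vertex n a) = vertex n a := by
    rw [mirror_vertex]; ring_nf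
  have hpar := nsep_modEq_card_invariant_sepPairs (mirror_involutive _)
    (fun _ => mirror_mem_ngonWithCenter _) (Or.inl ⟨hσa, mirror_zero _⟩)
    (fun _ _ _ _ => sepLine_mirror _)
  rwa [invariant_sepPairs_vertex_zero hodd, card_image_of_injOn (injOn_vertex_add_sub_pair a),
    Nat.card_Icc, add_tsub_cancel_right] at hpar

end Parity

theorem ngon_with_center_orchard_general (n : ℕ) [NeZero n] (hodd : Odd n) :
    ((n % 8 = 5 ∨ n % 8 = 7) → Mono (ngonWithCenter n)) ∧
    ((n % 8 = 1 ∨ n % 8 = 3) →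
      (∀ a b : Fin n, vtx n a ≠ vtx n b →
        Orchard (ngonWithCenter n) (vtx n a) (vtx n b)) ∧
      (∀ a : Fin n, ¬ Orchard (ngonWithCenter n) (vtx n a) (0, 0))) := by
  have hvv (a b : ℤ) (hab : vertex n a ≠ vertex n b) :
      Orchard (ngonWithCenter n) (vertex n a) (vertex n b) :=
    (orchard_ngonWithCenter_iff hodd).2
      (odd_nsep_vertex_vertex hodd fun h => hab (vertex_eq_vertex_iff.2 h))
  have hv0 (a : ℤ) : Orchard (ngonWithCenter n) (vertex n a) 0 ↔ n % 8 = 5 ∨ n % 8 = 7 := by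
    rw [orchard_ngonWithCenter_iff hodd, Nat.odd_iff, nsep_vertex_zero_modEq hodd a]
    have := Nat.odd_iff.1 hodd
    omega
  refine ⟨fun h8 P hP Q hQ hPQ => ?_, fun h8 => ⟨fun a b hab => ?_, fun a => ?_⟩⟩
  · rcases mem_ngonWithCenter.1 hP with rfl | ⟨a, rfl⟩ <;>
      rcases mem_ngonWithCenter.1 hQ with rfl | ⟨b, rfl⟩
    · exact absurd rfl hPQ
    · rw [Orchard, nsep_comm]
      exact (hv0 b).2 h8
    · exact (hv0 a).2 h8
    · exact hvv a b hPQ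
  · rw [vtx_eq_vertex, vtx_eq_vertex] at hab ⊢
    exact hvv _ _ hab
  · rw [vtx_eq_vertex, Prod.mk_zero_zero, hv0]
    omega

/-- For odd `n ≥ 5` with `n ≡ 5, 7 (mod 8)` (equivalently `n+1 ≡ 0, 6 (mod 8)`),
the regular `n`-gon together with its barycenter is monochromatic; for
`n ≡ 1, 3 (mod 8)` the Orchard partition is `(n,1)`: the vertices form one class
and the barycenter the other. -/
theorem ngon_with_center_orchard (n : ℕ) [NeZero n] (hn : 5 ≤ n) (hodd : Odd n) :
    ((n % 8 = 5 ∨ n % 8 = 7) → Mono (ngonWithCenter n)) ∧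
    ((n % 8 = 1 ∨ n % 8 = 3) →
      (∀ a b : Fin n, vtx n a ≠ vtx n b →
        Orchard (ngonWithCenter n) (vtx n a) (vtx n b)) ∧
      (∀ a : Fin n, ¬ Orchard (ngonWithCenter n) (vtx n a) (0, 0))) :=
  ngon_with_center_orchard_general n hodd
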